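/- arXiv:1504.04960 — 7 statements merged into one kernel-verified Lean document; each statement's English description precedes it below -/
import Mathlib

section
/- Fix a finite field F_q, positive integers m, n, c, a receiver with demand index d ∈ {1,...,m}, side information H ⊆ {1,...,m}\{d}, error parameter δ, and an mn×c matrix L over F_q. Fix an error pattern S ⊆ {1,...,c} with |S| = 2δ. Let Ĥ ⊆ {1,...,mn} be the coordinate positions belonging to the blocks indexed by H, let L_{H̄} be the submatrix of L consisting of the rows not in Ĥ, let I_S be the 2δ×c submatrix of the c×c identity matrix consisting of the rows indexed by S, and let I_{D(R)} be the (mn − n|H| + 2δ) × n matrix whose n rows corresponding to the demand block d (within the rows of L_{H̄}) form the n×n identity matrix and all of whose other entries are zero. Then the following are equivalent: (i) for every y ∈ F_q^{mn} with y zero on all coordinates of Ĥ and nonzero on the block of coordinates of d, and every ε̄ ∈ F_q^{2δ}, the row vector (y restricted to the complement of Ĥ, ε̄) multiplied by the stacked matrix [L_{H̄}; I_S] is nonzero; (ii) every column of I_{D(R)} lies in the column span of the stacked matrix [L_{H̄}; I_S]. -/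
/-!
Condition (i) says that every vector in the left kernel of the stacked matrix `M = [L_H̄; I_S]`
vanishes on the rows of block `d`: a pair `(y|_{H̄}, ε̄)` with `y` zero on `Ĥ` is just an
arbitrary vector indexed by the rows of `M`. By duality the column span of `M` is the annihilator
of its left kernel, and `x ⬝ e_r = x_r`, so condition (ii) on the unit columns `e_r` of
`I_{D(R)}` says the same.
-/

open Matrix

section ColumnSpan

variable {F ι κ : Type*} [Field F] [Fintype ι] [DecidableEq ι]

theorem mem_span_range_transpose_iff (M : Matrix ι κ F) (v : ι → F) :
    v ∈ Submodule.span F (Set.range Mᵀ) ↔ ∀ x : ι → F, x ᵥ* M = 0 → x ⬝ᵥ v = 0 := by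
  rw [← Subspace.forall_mem_dualAnnihilator_apply_eq_zero_iff,
    ← (dotProductEquiv F ι).forall_congr_right]
  refine forall_congr' fun x => imp_congr_left ?_
  rw [Submodule.mem_dualAnnihilator]
  change Submodule.span F _ ≤ LinearMap.ker (dotProductEquiv F ι x) ↔ _
  rw [Submodule.span_le]
  exact Set.range_subset_iff.trans funext_iff.symm

theorem single_mem_span_range_transpose_iff (M : Matrix ι κ F) (i : ι) :
    Pi.single i 1 ∈ Submodule.span F (Set.range Mᵀ) ↔ ∀ x : ι → F, x ᵥ* M = 0 → x i = 0 := by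
  simp only [mem_span_range_transpose_iff, dotProduct_single_one]

end ColumnSpan

theorem exists_sum_elim_subtype_eq {α κ β : Type*} [Zero β] (P : α → Prop) [DecidablePred P]
    (x : {a // P a} ⊕ κ → β) :
    ∃ y : α → β, (∀ a, ¬P a → y a = 0) ∧ Sum.elim (fun p => y p.1) (x ∘ Sum.inr) = x := by
  refine ⟨fun a => if h : P a then x (Sum.inl ⟨a, h⟩) else 0, fun a ha => dif_neg ha, ?_⟩
  ext (p | s)
  · exact dif_pos p.2
  · rfl

theorem stmt0_general (F : Type) [Field F]
    (m n c : ℕ)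
    (d : Fin m) (H : Finset (Fin m)) (hdH : d ∉ H)
    (L : Matrix (Fin m × Fin n) (Fin c) F)
    (S : Finset (Fin c)) :
    (∀ y : Fin m × Fin n → F,
        (∀ p : Fin m × Fin n, p.1 ∈ H → y p = 0) →
        (∃ k : Fin n, y (d, k) ≠ 0) →
        ∀ εbar : {s : Fin c // s ∈ S} → F,
          Matrix.vecMul
            (Sum.elim (fun p : {p : Fin m × Fin n // p.1 ∉ H} => y p.1) εbar)
            (Matrix.of (Sum.elim
              (fun p : {p : Fin m × Fin n // p.1 ∉ H} => L p.1)
              (fun (s : {s : Fin c // s ∈ S}) (i : Fin c) =>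
                if (s : Fin c) = i then (1 : F) else 0)))
          ≠ 0)
    ↔
    (∀ k : Fin n,
      (Sum.elim
          (fun p : {p : Fin m × Fin n // p.1 ∉ H} =>
            if p.1 = (d, k) then (1 : F) else 0)
          (fun _ : {s : Fin c // s ∈ S} => (0 : F)))
        ∈ Submodule.span F (Set.range
            (Matrix.of (Sum.elim
              (fun p : {p : Fin m × Fin n // p.1 ∉ H} => L p.1)
              (fun (s : {s : Fin c // s ∈ S}) (i : Fin c) =>
                if (s : Fin c) = i then (1 : F) else 0)))ᵀ)) := by
  have unit_column : ∀ k : Fin n,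
      Sum.elim (fun p : {p : Fin m × Fin n // p.1 ∉ H} => if p.1 = (d, k) then (1 : F) else 0)
          (fun _ : {s : Fin c // s ∈ S} => (0 : F)) =
        Pi.single (Sum.inl ⟨(d, k), hdH⟩) 1 := by
    intro k
    ext (p | s)
    · simp [Pi.single_apply, Subtype.ext_iff]
    · simp
  simp_rw [unit_column, single_mem_span_range_transpose_iff]
  constructor
  · intro h k x hx
    by_contra hxk
    obtain ⟨y, hyH, hxy⟩ := exists_sum_elim_subtype_eq (fun p : Fin m × Fin n => p.1 ∉ H) x
    rw [← hxy] at hx hxk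
    exact h y (fun p hp => hyH p (not_not.mpr hp)) ⟨k, hxk⟩ _ hx
  · rintro h y - ⟨k, hk⟩ εbar hy
    exact hk (h k _ hy)

/-- Lemma 1 of the paper: equivalence between the error-correction condition (i)
for a fixed error pattern `S` and the column-span condition (ii). Messages are
indexed by `Fin m × Fin n` (block `k` holds message `x_k`). -/
theorem stmt0 (F : Type) [Field F] [Fintype F]
    (m n c δ : ℕ) (hm : 0 < m) (hn : 0 < n) (hc : 0 < c)
    (d : Fin m) (H : Finset (Fin m)) (hdH : d ∉ H)
    (L : Matrix (Fin m × Fin n) (Fin c) F)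
    (S : Finset (Fin c)) (hS : S.card = 2 * δ) :
    (∀ y : Fin m × Fin n → F,
        (∀ p : Fin m × Fin n, p.1 ∈ H → y p = 0) →
        (∃ k : Fin n, y (d, k) ≠ 0) →
        ∀ εbar : {s : Fin c // s ∈ S} → F,
          Matrix.vecMul
            (Sum.elim (fun p : {p : Fin m × Fin n // p.1 ∉ H} => y p.1) εbar)
            (Matrix.of (Sum.elim
              (fun p : {p : Fin m × Fin n // p.1 ∉ H} => L p.1)
              (fun (s : {s : Fin c // s ∈ S}) (i : Fin c) =>
                if (s : Fin c) = i then (1 : F) else 0)))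
          ≠ 0)
    ↔
    (∀ k : Fin n,
      (Sum.elim
          (fun p : {p : Fin m × Fin n // p.1 ∉ H} =>
            if p.1 = (d, k) then (1 : F) else 0)
          (fun _ : {s : Fin c // s ∈ S} => (0 : F)))
        ∈ Submodule.span F (Set.range
            (Matrix.of (Sum.elim
              (fun p : {p : Fin m × Fin n // p.1 ∉ H} => L p.1)
              (fun (s : {s : Fin c // s ∈ S}) (i : Fin c) =>
                if (s : Fin c) = i then (1 : F) else 0)))ᵀ)) :=
  stmt0_general F m n c d H hdH L S
end

section
/- Fix a finite field F_q, positive integers m, n, c, a receiver with demand index d ∈ {1,...,m}, side information H ⊆ {1,...,m}\{d}, error parameter δ, an mn×c matrix L over F_q, and an error pattern S ⊆ {1,...,c} with |S| = 2δ. With Ĥ, L_{H̄}, I_S and I_{D(R)} as follows: Ĥ ⊆ {1,...,mn} is the set of coordinate positions in the blocks indexed by H; L_{H̄} is the submatrix of L consisting of the rows not in Ĥ; I_S is the submatrix of the c×c identity matrix with rows indexed by S; I_{D(R)} is the (mn − n|H| + 2δ) × n matrix whose n rows corresponding to the demand block d form the n×n identity matrix and whose other entries are zero. If every column of I_{D(R)}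 lies in the column span of the stacked matrix [L_{H̄}; I_S], then for every y ∈ F_q^{mn} that is zero on all coordinates of Ĥ and nonzero on the block of coordinates of d, and every ε ∈ F_q^c with support contained in S, one has yL + ε ≠ 0. -/
open Matrix

/-!
Stack the rows of `L` outside `Ĥ` on top of the rows `I_S`, and pair this matrix with the vector
`z = (y|_{Ĥᶜ}, ε|_S)`. Since `y` vanishes on `Ĥ` and `ε` off `S`, we get `z ᵥ* [L_{H̄}; I_S] = yL + ε`.
If `yL + ε = 0`, then `z` is orthogonal to the column span of the stacked matrix, hence to the
unit vector at `(d, k)`, which forces `y (d, k) = 0` for every `k`.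
-/

theorem Matrix.dotProduct_eq_zero_of_mem_span_col {R m n : Type*} [CommSemiring R]
    [Fintype m] [Fintype n] {B : Matrix m n R} {v z : m → R}
    (hv : v ∈ Submodule.span R (Set.range Bᵀ)) (hz : z ᵥ* B = 0) : z ⬝ᵥ v = 0 := by
  obtain ⟨w, rfl⟩ : v ∈ LinearMap.range B.mulVecLin := by rwa [range_mulVecLin]
  rw [mulVecLin_apply, dotProduct_mulVec, hz, zero_dotProduct]

theorem Matrix.vecMul_submatrix_val_of_eq_zero {R ι n : Type*} [NonUnitalNonAssocSemiring R]
    [Fintype ι] (p : ι → Prop) [Fintype {i // p i}] (A : Matrix ι n R) {y : ι → R}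
    (hy : ∀ i, ¬p i → y i = 0) :
    (y ∘ Subtype.val) ᵥ* A.submatrix (Subtype.val : {i // p i} → ι) id = y ᵥ* A := by
  classical
  ext j
  simp only [vecMul, dotProduct, Function.comp_apply, submatrix_apply, id_eq]
  rw [← Finset.sum_subtype {i | p i}.toFinset (by simp) fun i => y i * A i j]
  exact Fintype.sum_subset fun i hi =>
    Set.mem_toFinset.mpr (by_contra fun hpi => hi (by rw [hy i hpi, zero_mul]))

theorem stmt1_general (F : Type) [Field F]
    (m n c : ℕ)
    (d : Fin m) (H : Finset (Fin m)) (hdH : d ∉ H)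
    (L : Matrix (Fin m × Fin n) (Fin c) F)
    (S : Finset (Fin c))
    (hspan : ∀ k : Fin n,
      (Sum.elim
          (fun p : {p : Fin m × Fin n // p.1 ∉ H} =>
            if p.1 = (d, k) then (1 : F) else 0)
          (fun _ : {s : Fin c // s ∈ S} => (0 : F)))
        ∈ Submodule.span F (Set.range
            (Matrix.of (Sum.elim
              (fun p : {p : Fin m × Fin n // p.1 ∉ H} => L p.1)
              (fun (s : {s : Fin c // s ∈ S}) (i : Fin c) =>
                if (s : Fin c) = i then (1 : F) else 0)))ᵀ)) :
    ∀ y : Fin m × Fin n → F,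
      (∀ p : Fin m × Fin n, p.1 ∈ H → y p = 0) →
      (∃ k : Fin n, y (d, k) ≠ 0) →
      ∀ ε : Fin c → F, (∀ i : Fin c, ε i ≠ 0 → i ∈ S) →
        Matrix.vecMul y L + ε ≠ 0 := by
  rintro y hyH ⟨k, hyk⟩ ε hε hzero
  let B := fromRows (L.submatrix (Subtype.val : {p : Fin m × Fin n // p.1 ∉ H} → _) id)
    ((1 : Matrix (Fin c) (Fin c) F).submatrix (Subtype.val : {s // s ∈ S} → Fin c) id)
  have hmem : Pi.single (Sum.inl ⟨(d, k), hdH⟩) 1 ∈ Submodule.span F (Set.range Bᵀ) := by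
    convert hspan k using 1
    · rfl
    · funext x
      rcases x with p | s <;> simp [Pi.single_apply, Subtype.ext_iff]
  have horth : Sum.elim (y ∘ Subtype.val) (ε ∘ Subtype.val) ᵥ* B = 0 := by
    rw [sumElim_vecMul_fromRows,
      vecMul_submatrix_val_of_eq_zero _ _ fun p hp => hyH p (not_not.mp hp),
      vecMul_submatrix_val_of_eq_zero (· ∈ S) _ fun i hi => not_not.mp (mt (hε i) hi), vecMul_one,
      hzero]
  have h := dotProduct_eq_zero_of_mem_span_col hmem horth
  rw [dotProduct_single, Sum.elim_inl, Function.comp_apply, mul_one] at h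
  exact hyk h

/-- The 'if' direction of Lemma 1: the column-span condition implies the
error-correction condition `y L + ε ≠ 0` for errors supported in `S`. -/
theorem stmt1 (F : Type) [Field F] [Fintype F]
    (m n c δ : ℕ) (hm : 0 < m) (hn : 0 < n) (hc : 0 < c)
    (d : Fin m) (H : Finset (Fin m)) (hdH : d ∉ H)
    (L : Matrix (Fin m × Fin n) (Fin c) F)
    (S : Finset (Fin c)) (hS : S.card = 2 * δ)
    (hspan : ∀ k : Fin n,
      (Sum.elim
          (fun p : {p : Fin m × Fin n // p.1 ∉ H} =>
            if p.1 = (d, k) then (1 : F) else 0)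
          (fun _ : {s : Fin c // s ∈ S} => (0 : F)))
        ∈ Submodule.span F (Set.range
            (Matrix.of (Sum.elim
              (fun p : {p : Fin m × Fin n // p.1 ∉ H} => L p.1)
              (fun (s : {s : Fin c // s ∈ S}) (i : Fin c) =>
                if (s : Fin c) = i then (1 : F) else 0)))ᵀ)) :
    ∀ y : Fin m × Fin n → F,
      (∀ p : Fin m × Fin n, p.1 ∈ H → y p = 0) →
      (∃ k : Fin n, y (d, k) ≠ 0) →
      ∀ ε : Fin c → F, (∀ i : Fin c, ε i ≠ 0 → i ∈ S) →
        Matrix.vecMul y L + ε ≠ 0 :=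
  stmt1_general F m n c d H hdH L S hspan
end

section
/- Fix a finite field F_q, positive integers m, n, c, a receiver with demand index d ∈ {1,...,m}, side information H ⊆ {1,...,m}\{d}, error parameter δ, an mn×c matrix L over F_q, and an error pattern S ⊆ {1,...,c} with |S| = 2δ. With Ĥ, L_{H̄}, I_S and I_{D(R)} as follows: Ĥ ⊆ {1,...,mn} is the set of coordinate positions in the blocks indexed by H; L_{H̄} is the submatrix of L consisting of the rows not in Ĥ; I_S is the submatrix of the c×c identity matrix with rows indexed by S; I_{D(R)} is the (mn − n|H| + 2δ) × n matrix whose n rows corresponding to the demand block d form the n×n identity matrix and whose other entries are zero. If for every y ∈ F_q^{mn} that is zero on all coordinates of Ĥ and nonzero on the block of coordinates of d, and every ε ∈ F_q^c with support contained in S, one has yL + ε ≠ 0, then every column of I_{D(R)} lies in the column span of the stacked matrix [L_{H̄}; I_S]. -/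
/-!
If the demanded unit vector were outside the column span of `[L_H̄; I_S]`, a linear functional
vanishing on that span but not on the vector is a row vector `g` with `g [L_H̄; I_S] = 0` and a
nonzero entry at the demanded position `(d, k)`. Extending the `L_H̄`-part of `g` by zero on `Ĥ`
gives `y`, and extending the `I_S`-part by zero off `S` gives `ε`; then `y L + ε = g [L_H̄; I_S] = 0`
with `y (d, k) ≠ 0`, which the error-correction hypothesis forbids.
-/

namespace Matrix

variable {K α κ ι : Type*} [Field K]

theorem exists_vecMul_eq_zero_of_notMem_span_cols [Fintype ι] (M : Matrix ι κ K)
    {v : ι → K} (hv : v ∉ Submodule.span K (Set.range Mᵀ)) :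
    ∃ g : ι → K, g ᵥ* M = 0 ∧ g ⬝ᵥ v ≠ 0 := by
  classical
  obtain ⟨f, hfv, hfM⟩ := Submodule.exists_dual_map_eq_bot_of_notMem hv inferInstance
  have hf : ∀ w, f w = (dotProductEquiv K ι).symm f ⬝ᵥ w := fun w => by
    conv_lhs => rw [← (dotProductEquiv K ι).apply_symm_apply f]
    rfl
  refine ⟨(dotProductEquiv K ι).symm f, funext fun j => ?_, by rwa [← hf]⟩
  rw [vecMul, ← hf, Pi.zero_apply, ← Submodule.mem_bot K, ← hfM]
  exact Submodule.mem_map_of_mem (Submodule.subset_span ⟨j, rfl⟩)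

theorem dite_dotProduct [Fintype α] (P : α → Prop) [DecidablePred P]
    (f : {a // P a} → K) (v : α → K) :
    (fun a => if h : P a then f ⟨a, h⟩ else 0) ⬝ᵥ v = f ⬝ᵥ fun a => v a := by
  have hout : ∀ a : {a // ¬P a}, (if h : P a then f ⟨a, h⟩ else 0) * v a = 0 := fun a => by
    rw [dif_neg a.2, zero_mul]
  rw [dotProduct, ← Fintype.sum_subtype_add_sum_subtype P, Fintype.sum_eq_zero _ hout, add_zero]
  exact Finset.sum_congr rfl fun a _ => by rw [dif_pos a.2]

theorem dotProduct_ite_coe_eq [Fintype α] [DecidableEq α] (P : α → Prop) [DecidablePred P]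
    (f : {a // P a} → K) (b : α) :
    (f ⬝ᵥ fun a => if (a : α) = b then 1 else 0) = if h : P b then f ⟨b, h⟩ else 0 := by
  rw [← dite_dotProduct P f fun a => if a = b then 1 else 0]
  simp [dotProduct]

theorem dotProduct_sum_type [Fintype α] [Fintype ι] (u w : α ⊕ ι → K) :
    u ⬝ᵥ w = (u ∘ .inl) ⬝ᵥ (w ∘ .inl) + (u ∘ .inr) ⬝ᵥ (w ∘ .inr) :=
  Fintype.sum_sum_type _

theorem vecMul_of_sum_elim_rows [Fintype α] [Fintype κ] [DecidableEq κ] (L : Matrix α κ K)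
    (P : α → Prop) [DecidablePred P] (S : Finset κ) (g : {a // P a} ⊕ S → K) :
    g ᵥ* of (Sum.elim (fun a : {a // P a} => L a)
        (fun (s : S) (i : κ) => if (s : κ) = i then (1 : K) else 0)) =
      (fun a => if h : P a then g (.inl ⟨a, h⟩) else 0) ᵥ* L +
        fun i => if h : i ∈ S then g (.inr ⟨i, h⟩) else 0 := by
  funext i
  rw [Pi.add_apply, vecMul, vecMul, dotProduct_sum_type]
  congr 1
  · exact (dite_dotProduct P (g ∘ .inl) fun a => L a i).symm
  -- `convert` reconciles the two `Fintype ↥S` instances.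
  · convert dotProduct_ite_coe_eq (· ∈ S) (g ∘ .inr) i using 2 <;> rfl

end Matrix

open Matrix

theorem stmt2_general (F : Type) [Field F]
    (m n c : ℕ)
    (d : Fin m) (H : Finset (Fin m))
    (L : Matrix (Fin m × Fin n) (Fin c) F)
    (S : Finset (Fin c))
    (hec : ∀ y : Fin m × Fin n → F,
      (∀ p : Fin m × Fin n, p.1 ∈ H → y p = 0) →
      (∃ k : Fin n, y (d, k) ≠ 0) →
      ∀ ε : Fin c → F, (∀ i : Fin c, ε i ≠ 0 → i ∈ S) →
        Matrix.vecMul y L + ε ≠ 0) :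
    ∀ k : Fin n,
      (Sum.elim
          (fun p : {p : Fin m × Fin n // p.1 ∉ H} =>
            if p.1 = (d, k) then (1 : F) else 0)
          (fun _ : {s : Fin c // s ∈ S} => (0 : F)))
        ∈ Submodule.span F (Set.range
            (Matrix.of (Sum.elim
              (fun p : {p : Fin m × Fin n // p.1 ∉ H} => L p.1)
              (fun (s : {s : Fin c // s ∈ S}) (i : Fin c) =>
                if (s : Fin c) = i then (1 : F) else 0)))ᵀ) := by
  intro k
  by_contra hk
  obtain ⟨g, hgM, hge⟩ := exists_vecMul_eq_zero_of_notMem_span_cols _ hk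
  rw [vecMul_of_sum_elim_rows] at hgM
  refine hec _ (fun p hp => dif_neg (not_not.2 hp)) ⟨k, ?_⟩ _ (fun i hi => ?_) hgM
  · rw [dotProduct_sum_type] at hge
    simpa [dotProduct_ite_coe_eq] using hge
  · exact of_not_not fun h => hi (dif_neg h)

/-- The 'only if' direction of Lemma 1: the error-correction condition
`y L + ε ≠ 0` for errors supported in `S` implies the column-span condition. -/
theorem stmt2 (F : Type) [Field F] [Fintype F]
    (m n c δ : ℕ) (hm : 0 < m) (hn : 0 < n) (hc : 0 < c)
    (d : Fin m) (H : Finset (Fin m)) (hdH : d ∉ H)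
    (L : Matrix (Fin m × Fin n) (Fin c) F)
    (S : Finset (Fin c)) (hS : S.card = 2 * δ)
    (hec : ∀ y : Fin m × Fin n → F,
      (∀ p : Fin m × Fin n, p.1 ∈ H → y p = 0) →
      (∃ k : Fin n, y (d, k) ≠ 0) →
      ∀ ε : Fin c → F, (∀ i : Fin c, ε i ≠ 0 → i ∈ S) →
        Matrix.vecMul y L + ε ≠ 0) :
    ∀ k : Fin n,
      (Sum.elim
          (fun p : {p : Fin m × Fin n // p.1 ∉ H} =>
            if p.1 = (d, k) then (1 : F) else 0)
          (fun _ : {s : Fin c // s ∈ S} => (0 : F)))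
        ∈ Submodule.span F (Set.range
            (Matrix.of (Sum.elim
              (fun p : {p : Fin m × Fin n // p.1 ∉ H} => L p.1)
              (fun (s : {s : Fin c // s ∈ S}) (i : Fin c) =>
                if (s : Fin c) = i then (1 : F) else 0)))ᵀ) :=
  stmt2_general F m n c d H L S hec
end

section
/- Fix a finite field F_q, positive integers m, n, c, a receiver with demand index d ∈ {1,...,m}, side information H ⊆ {1,...,m}\{d}, error parameter δ, an mn×c matrix L over F_q, and an error pattern S ⊆ {1,...,c} with |S| = 2δ. Let Ĥ ⊆ {1,...,mn} be the coordinate positions in the blocks indexed by H, let x̂_d be the n coordinate positions of block d, and let r̄ = {1,...,mn} \ (Ĥ ∪ x̂_d). Let L_{H̄}, L_{x̂_d}, L_{r̄} be the submatrices of L with rows indexed by the complement of Ĥ, by x̂_d, and by r̄ respectively, and let I_S be the submatrix of the c×c identity matrix with rows indexed by S. Suppose that for every y ∈ F_q^{mn} that is zero on all coordinates of Ĥ and nonzero on x̂_d, and every ε ∈ F_q^c supported in S, one has yL + ε ≠ 0. Then rank([L_{H̄}; I_S]) = n + rank([L_{r̄}; I_S]), where [A; B] denotes vertical concatenation of matrices.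 -/
/-!
A combination `∑ₖ aₖ L_{(d,k)}` of the rows of the demanded block that lies in the row space of
`[L_{r̄}; I_S]` can be written as `yL + ε` with `y` supported on `r̄` and `ε` supported on `S`.
Subtracting, the vector equal to `a` on block `d` and to `-y` on `r̄` vanishes on `Ĥ` and is
mapped by `L` to `ε`, so the decodability hypothesis forces `a = 0`. Hence the `n` rows of block
`d` are linearly independent modulo the row space of `[L_{r̄}; I_S]`, and adding them to it
raises the rank by exactly `n`.
-/

open Matrix Set Submodule

variable {F : Type*} [Field F]

theorem finrank_span_range_sup_eq {ι V : Type*} [Fintype ι] [AddCommGroup V] [Module F V]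
    [FiniteDimensional F V] {u : ι → V} {W : Submodule F V}
    (h : ∀ a : ι → F, ∑ i, a i • u i ∈ W → a = 0) :
    Module.finrank F ↥(span F (range u) ⊔ W) = Fintype.card ι + Module.finrank F W := by
  have hli : LinearIndependent F u := Fintype.linearIndependent_iff.2 fun a ha =>
    congrFun (h a (ha ▸ W.zero_mem))
  have hdisj : Disjoint (span F (range u)) W := by
    rw [Submodule.disjoint_def]
    rintro x hxu hxW
    obtain ⟨a, rfl⟩ := (mem_span_range_iff_exists_fun F).1 hxu
    simp [h a hxW]
  rw [← finrank_span_eq_card hli, ← Submodule.finrank_sup_add_finrank_inf_eq, hdisj.eq_bot,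
    finrank_bot, add_zero]

section StackWithIdRows

variable {ι κ : Type*} [DecidableEq κ] (L : Matrix ι κ F) (S : Finset κ)

/-- The paper's `[L_P; I_S]`. -/
def stackWithIdRows (P : ι → Prop) : Matrix ({i // P i} ⊕ {s // s ∈ S}) κ F :=
  Matrix.of (Sum.elim (fun p => L p.1) (fun s j => if (s : κ) = j then 1 else 0))

theorem span_range_stackWithIdRows (P : ι → Prop) :
    span F (range (stackWithIdRows L S P).row) =
      span F (L.row '' {i | P i}) ⊔ span F (range fun (s : {s // s ∈ S}) (j : κ) =>
        if (s : κ) = j then (1 : F) else 0) := by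
  rw [image_eq_range L.row, ← span_union, ← Set.Sum.elim_range]
  rfl

theorem span_range_stackWithIdRows_eq_sup {P Q : ι → Prop} {s : Set ι}
    (h : {i | P i} = s ∪ {i | Q i}) :
    span F (range (stackWithIdRows L S P).row) =
      span F (L.row '' s) ⊔ span F (range (stackWithIdRows L S Q).row) := by
  rw [span_range_stackWithIdRows, span_range_stackWithIdRows, h, image_union L.row, span_union,
    sup_assoc]

theorem exists_vecMul_add_eq_of_mem_span_sup [Fintype ι] {s : Set ι} {v : κ → F}
    (hv : v ∈ span F (L.row '' s) ⊔ span F (range fun (s : {s // s ∈ S}) (j : κ) =>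
        if (s : κ) = j then (1 : F) else 0)) :
    ∃ y : ι → F, (∀ i ∉ s, y i = 0) ∧
      ∃ ε : κ → F, (∀ j, ε j ≠ 0 → j ∈ S) ∧ y ᵥ* L + ε = v := by
  obtain ⟨x, hx, ε, hε, rfl⟩ := mem_sup.1 hv
  obtain ⟨y, hy, rfl⟩ := (Finsupp.mem_span_image_iff_linearCombination F).1 hx
  have hεS : span F (range fun (s : {s // s ∈ S}) (j : κ) => if (s : κ) = j then (1 : F) else 0)
      ≤ Submodule.pi (↑S)ᶜ fun _ => ⊥ := by
    refine span_le.2 ?_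
    rintro _ ⟨s, rfl⟩ j hj
    simpa using fun h : (s : κ) = j => hj (h ▸ s.2)
  refine ⟨y, (Finsupp.mem_supported' F y).1 hy, ε, fun j hj => ?_, ?_⟩
  · by_contra hjS
    exact hj (hεS hε j hjS)
  · congr 1
    exact vecMul_eq_sum _ _ |>.trans ((Finsupp.linearCombination_apply F y).trans
      (Finsupp.sum_fintype _ _ fun _ => zero_smul F _)).symm

end StackWithIdRows

section Blocks

variable {α β κ : Type*} [Fintype α] [Fintype β] [DecidableEq α] (L : Matrix (α × β) κ F)

theorem ite_fst_vecMul (d : α) (a : β → F) :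
    (fun p : α × β => if p.1 = d then a p.2 else 0) ᵥ* L = ∑ k, a k • L (d, k) := by
  rw [vecMul_eq_sum, Fintype.sum_prod_type]
  simp [ite_smul]

theorem eq_zero_of_sum_smul_mem_span_stackWithIdRows [DecidableEq κ] {d : α} {H : Finset α}
    {S : Finset κ} (hdH : d ∉ H)
    (hec : ∀ y : α × β → F, (∀ p : α × β, p.1 ∈ H → y p = 0) → (∃ k : β, y (d, k) ≠ 0) →
      ∀ ε : κ → F, (∀ i : κ, ε i ≠ 0 → i ∈ S) → y ᵥ* L + ε ≠ 0)
    (a : β → F)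
    (ha : ∑ k, a k • L (d, k) ∈
      span F (range (stackWithIdRows L S fun p => p.1 ∉ H ∧ p.1 ≠ d).row)) :
    a = 0 := by
  rw [span_range_stackWithIdRows] at ha
  obtain ⟨y, hy, ε, hε, hyε⟩ := exists_vecMul_add_eq_of_mem_span_sup L S ha
  by_contra hne
  obtain ⟨k, hk⟩ := Function.ne_iff.1 hne
  refine hec ((fun p => if p.1 = d then a p.2 else 0) - y) (fun p hp => ?_) ⟨k, ?_⟩ (-ε)
    (by simpa using hε) ?_
  · have hpd : p.1 ≠ d := fun h => hdH (h ▸ hp)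
    simp [hpd, hy p (by simp [hp])]
  · simpa [hy (d, k) (by simp)] using hk
  · rw [sub_vecMul, ite_fst_vecMul, ← hyε]
    abel

end Blocks

theorem stmt3_general (F : Type) [Field F]
    (m n c : ℕ)
    (d : Fin m) (H : Finset (Fin m)) (hdH : d ∉ H)
    (L : Matrix (Fin m × Fin n) (Fin c) F)
    (S : Finset (Fin c))
    (hec : ∀ y : Fin m × Fin n → F,
      (∀ p : Fin m × Fin n, p.1 ∈ H → y p = 0) →
      (∃ k : Fin n, y (d, k) ≠ 0) →
      ∀ ε : Fin c → F, (∀ i : Fin c, ε i ≠ 0 → i ∈ S) →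
        Matrix.vecMul y L + ε ≠ 0) :
    (Matrix.of (Sum.elim
        (fun p : {p : Fin m × Fin n // p.1 ∉ H} => L p.1)
        (fun (s : {s : Fin c // s ∈ S}) (i : Fin c) =>
          if (s : Fin c) = i then (1 : F) else 0))).rank
    = n + (Matrix.of (Sum.elim
        (fun p : {p : Fin m × Fin n // p.1 ∉ H ∧ p.1 ≠ d} => L p.1)
        (fun (s : {s : Fin c // s ∈ S}) (i : Fin c) =>
          if (s : Fin c) = i then (1 : F) else 0))).rank := by
  have hrows : {p : Fin m × Fin n | p.1 ∉ H} =
      range (fun k => (d, k)) ∪ {p | p.1 ∉ H ∧ p.1 ≠ d} := by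
    ext ⟨i, k⟩
    by_cases hi : i = d
    · simp [hi, hdH]
    · simp [hi, Ne.symm hi]
  change (stackWithIdRows L S _).rank = n + (stackWithIdRows L S _).rank
  rw [rank_eq_finrank_span_row, rank_eq_finrank_span_row,
    span_range_stackWithIdRows_eq_sup L S hrows, ← range_comp]
  exact (finrank_span_range_sup_eq (eq_zero_of_sum_smul_mem_span_stackWithIdRows L hdH hec)).trans
    (by rw [Fintype.card_fin])

/-- The rank decomposition from the proof of Lemma 1:
`rank [L_{H̄}; I_S] = n + rank [L_{r̄}; I_S]`, where `r̄` consists of the rows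
neither in the side-information blocks `Ĥ` nor in the demanded block `d`. -/
theorem stmt3 (F : Type) [Field F] [Fintype F]
    (m n c δ : ℕ) (hm : 0 < m) (hn : 0 < n) (hc : 0 < c)
    (d : Fin m) (H : Finset (Fin m)) (hdH : d ∉ H)
    (L : Matrix (Fin m × Fin n) (Fin c) F)
    (S : Finset (Fin c)) (hS : S.card = 2 * δ)
    (hec : ∀ y : Fin m × Fin n → F,
      (∀ p : Fin m × Fin n, p.1 ∈ H → y p = 0) →
      (∃ k : Fin n, y (d, k) ≠ 0) →
      ∀ ε : Fin c → F, (∀ i : Fin c, ε i ≠ 0 → i ∈ S) →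
        Matrix.vecMul y L + ε ≠ 0) :
    (Matrix.of (Sum.elim
        (fun p : {p : Fin m × Fin n // p.1 ∉ H} => L p.1)
        (fun (s : {s : Fin c // s ∈ S}) (i : Fin c) =>
          if (s : Fin c) = i then (1 : F) else 0))).rank
    = n + (Matrix.of (Sum.elim
        (fun p : {p : Fin m × Fin n // p.1 ∉ H ∧ p.1 ≠ d} => L p.1)
        (fun (s : {s : Fin c // s ∈ S}) (i : Fin c) =>
          if (s : Fin c) = i then (1 : F) else 0))).rank :=
  stmt3_general F m n c d H hdH L S hec
end

section
/- Let I(X,R) be an index coding problem over a finite field F_q with m messages of dimension n and receivers R_1,...,R_t, where R_i demands message x_{f(i)} and has side information H_i, and let δ_1,...,δ_t be nonnegative integers. An mn×c matrix L over F_q is a differential error correcting index code for I(X,R) (i.e., for each receiver R_i there exists a decoding function ψ_i with ψ_i(yL+ε, (x_k)_{k∈H_i}) = x_{f(i)} for all y ∈ F_q^{mn} and all ε ∈ F_q^c with wt(ε) ≤ δ_i) if and only if for every receiver R_i and every y ∈ F_q^{mn} with y zero on all coordinates of Ĥ_i and nonzero on the block of coordinates of f(i), one has yL + ε ≠ 0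 for all ε ∈ F_q^c with wt(ε) ≤ 2δ_i. -/
open Matrix

/-!
A receiver sees `enc x + ε` with `wt ε ≤ δ`. Two messages with the same side information but
different demands can be confused exactly when their received words can coincide, i.e. when
`enc x - enc x'` has Hamming weight `≤ 2δ`, since every word of weight `≤ 2δ` is a difference of
two words of weight `≤ δ`. By additivity this is a condition on `y = x - x'`, which
has zero side information and nonzero demand.
-/

section Hamming

variable {ι F : Type*} [Fintype ι] [DecidableEq F]

theorem hammingNorm_sub_le [AddGroup F] (a b : ι → F) :
    hammingNorm (a - b) ≤ hammingNorm a + hammingNorm b := by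
  classical
  unfold hammingNorm
  refine (Finset.card_le_card fun j hj => ?_).trans (Finset.card_union_le _ _)
  simp only [Finset.mem_union, Finset.mem_filter, Finset.mem_univ, true_and] at hj ⊢
  by_contra! h
  simp [h.1, h.2] at hj

theorem exists_sub_eq_of_hammingNorm_le_add [AddCommGroup F] {η : ι → F} {δ₁ δ₂ : ℕ}
    (hη : hammingNorm η ≤ δ₁ + δ₂) :
    ∃ a b : ι → F, hammingNorm a ≤ δ₁ ∧ hammingNorm b ≤ δ₂ ∧ a - b = η := by
  classical
  set S : Finset ι := {j | η j ≠ 0}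
  obtain ⟨T, hTS, hT⟩ := Finset.exists_subset_card_eq (min_le_right δ₁ S.card)
  refine ⟨T.piecewise η 0, T.piecewise η 0 - η, ?_, ?_, sub_sub_cancel _ _⟩
  · calc hammingNorm (T.piecewise η 0) ≤ T.card :=
          Finset.card_le_card fun j hj => by
            by_contra hjT
            simp [hjT] at hj
      _ ≤ δ₁ := hT ▸ min_le_left _ _
  · calc hammingNorm (T.piecewise η 0 - η) ≤ (S \ T).card :=
          Finset.card_le_card fun j hj => by
            by_cases hjT : j ∈ T <;> simp_all [S]
      _ = S.card - T.card := Finset.card_sdiff_of_subset hTS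
      _ ≤ δ₂ := by
          have hS : S.card ≤ δ₁ + δ₂ := hη
          omega

end Hamming

section Decoding

variable {X S D ι F : Type*} [AddCommGroup X] [AddCommGroup S] [AddCommGroup D]
  [Fintype ι] [DecidableEq F] [AddCommGroup F]
  (enc : X →+ (ι → F)) (side : X →+ S) (demand : X →+ D) (δ : ℕ)

theorem demand_eq_zero_of_decoder {ψ : (ι → F) → S → D}
    (hψ : ∀ x ε, hammingNorm ε ≤ δ → ψ (enc x + ε) (side x) = demand x)
    {y : X} (hy : side y = 0) {ε : ι → F} (hε : hammingNorm ε ≤ 2 * δ)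
    (hyε : enc y + ε = 0) : demand y = 0 := by
  obtain ⟨a, b, ha, hb, rfl⟩ := exists_sub_eq_of_hammingNorm_le_add (two_mul δ ▸ hε)
  have hconf : enc y + a = enc 0 + b := by
    rw [map_zero, zero_add, ← sub_eq_zero, ← hyε]
    abel
  calc demand y = ψ (enc y + a) (side y) := (hψ y a ha).symm
    _ = ψ (enc 0 + b) (side 0) := by rw [hconf, hy, side.map_zero]
    _ = demand 0 := hψ 0 b hb
    _ = 0 := map_zero demand

theorem exists_decoder_of_demand_eq_zero
    (h : ∀ y, side y = 0 → ∀ ε : ι → F, hammingNorm ε ≤ 2 * δ → enc y + ε = 0 → demand y = 0) :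
    ∃ ψ : (ι → F) → S → D, ∀ x ε, hammingNorm ε ≤ δ → ψ (enc x + ε) (side x) = demand x := by
  classical
  let consistent (r : ι → F) (s : S) (x : X) : Prop :=
    side x = s ∧ ∃ ε, hammingNorm ε ≤ δ ∧ enc x + ε = r
  refine ⟨fun r s => if hx : ∃ x, consistent r s x then demand hx.choose else 0, fun x ε hε => ?_⟩
  have hx : ∃ x', consistent (enc x + ε) (side x) x' := ⟨x, rfl, ε, hε, rfl⟩
  dsimp only
  rw [dif_pos hx]
  obtain ⟨hside, ε', hε', henc⟩ := hx.choose_spec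
  have hdiff := h (hx.choose - x) (by rw [map_sub, hside, sub_self]) (ε' - ε)
    (by have := hammingNorm_sub_le ε' ε; omega)
    (by rw [map_sub, ← sub_eq_zero.mpr henc]; abel)
  rwa [map_sub, sub_eq_zero] at hdiff

theorem exists_decoder_iff :
    (∃ ψ : (ι → F) → S → D, ∀ x ε, hammingNorm ε ≤ δ → ψ (enc x + ε) (side x) = demand x) ↔
      ∀ y, side y = 0 → demand y ≠ 0 → ∀ ε : ι → F, hammingNorm ε ≤ 2 * δ → enc y + ε ≠ 0 := by
  refine ⟨fun ⟨ψ, hψ⟩ y hy hdem ε hε hyε => hdem ?_, fun h => ?_⟩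
  · exact demand_eq_zero_of_decoder enc side demand δ hψ hy hε hyε
  · exact exists_decoder_of_demand_eq_zero enc side demand δ
      fun y hy ε hε hyε => by_contra fun hdem => h y hy hdem ε hε hyε

end Decoding

theorem stmt4_general (F : Type) [Field F] [DecidableEq F]
    (m n c t : ℕ)
    (f : Fin t → Fin m) (Hs : Fin t → Finset (Fin m))
    (δ : Fin t → ℕ)
    (L : Matrix (Fin m × Fin n) (Fin c) F) :
    (∀ i : Fin t,
      ∃ ψ : (Fin c → F) → ({k : Fin m // k ∈ Hs i} → Fin n → F) → (Fin n → F),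
        ∀ x : Fin m → Fin n → F, ∀ ε : Fin c → F, hammingNorm ε ≤ δ i →
          ψ (Matrix.vecMul (fun p : Fin m × Fin n => x p.1 p.2) L + ε)
            (fun k : {k : Fin m // k ∈ Hs i} => x k.1) = x (f i))
    ↔
    (∀ i : Fin t, ∀ y : Fin m × Fin n → F,
      (∀ p : Fin m × Fin n, p.1 ∈ Hs i → y p = 0) →
      (∃ k : Fin n, y (f i, k) ≠ 0) →
      ∀ ε : Fin c → F, hammingNorm ε ≤ 2 * δ i →
        Matrix.vecMul y L + ε ≠ 0) := by
  refine forall_congr' fun i => ?_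
  let side : (Fin m × Fin n → F) →+ ({k : Fin m // k ∈ Hs i} → Fin n → F) :=
    AddMonoidHom.mk' (fun y k b => y (k.1, b)) fun _ _ => rfl
  let demand : (Fin m × Fin n → F) →+ (Fin n → F) :=
    AddMonoidHom.mk' (fun y b => y (f i, b)) fun _ _ => rfl
  calc _ ↔ _ := exists_congr fun ψ => (Equiv.curry _ _ _).symm.forall_congr_left
    _ ↔ _ := exists_decoder_iff (vecMulLinear L).toAddMonoidHom side demand (δ i)
    _ ↔ _ := forall_congr' fun y => imp_congr
      (by simp [side, funext_iff, Prod.forall, forall_comm (β := Fin n)])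
      (imp_congr Function.ne_iff Iff.rfl)

/-- Characterization of differential error correcting index codes (Section II):
decoding functions correcting `δ i` errors exist at each receiver iff
`y L + ε ≠ 0` for every `y` vanishing on the side information of the receiver
and nonzero on its demanded block, and every `ε` of weight at most `2 δ i`. -/
theorem stmt4 (F : Type) [Field F] [Fintype F] [DecidableEq F]
    (m n c t : ℕ) (hm : 0 < m) (hn : 0 < n) (hc : 0 < c)
    (f : Fin t → Fin m) (Hs : Fin t → Finset (Fin m)) (hf : ∀ i, f i ∉ Hs i)
    (δ : Fin t → ℕ)
    (L : Matrix (Fin m × Fin n) (Fin c) F) :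
    (∀ i : Fin t,
      ∃ ψ : (Fin c → F) → ({k : Fin m // k ∈ Hs i} → Fin n → F) → (Fin n → F),
        ∀ x : Fin m → Fin n → F, ∀ ε : Fin c → F, hammingNorm ε ≤ δ i →
          ψ (Matrix.vecMul (fun p : Fin m × Fin n => x p.1 p.2) L + ε)
            (fun k : {k : Fin m // k ∈ Hs i} => x k.1) = x (f i))
    ↔
    (∀ i : Fin t, ∀ y : Fin m × Fin n → F,
      (∀ p : Fin m × Fin n, p.1 ∈ Hs i → y p = 0) →
      (∃ k : Fin n, y (f i, k) ≠ 0) →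
      ∀ ε : Fin c → F, hammingNorm ε ≤ 2 * δ i →
        Matrix.vecMul y L + ε ≠ 0) :=
  stmt4_general F m n c t f Hs δ L
end

section
/- Let I(X,R) be an index coding problem over a finite field F_q with m messages of dimension n and receivers R_1,...,R_t (receiver R_i demanding x_{f(i)} with side information H_i), let δ_1,...,δ_t be nonnegative integers, and let c be a positive integer. If there exists a vector linear differential error correcting index code L over F_q of length c and dimension n for I(X,R) in which receiver R_i corrects any δ_i errors, then there exists a discrete polymatroid representable over F_q on ground set {1,...,m+2c} whose rank function r satisfies r({1,...,m+2c}) = mn+c together with: (A) r({i}) = n for all i ∈ {1,...,m}, r({1,...,m+c}) = mn+c, and r({m+i}) = 1 for all i ∈ {1,...,2c}; (B) for every i ∈ {1,...,c}, r({1,...,m} ∪ {m+i, m+c+i}) = r({1,...,m} ∪ {m+i}) = r({1,...,m} ∪ {m+c+i}); (C) for every receiver R_i and every F ⊆ {1,...,c} with |F| = 2δ_i, setting T = H_i ∪ {m+j : j ∈ {1,...,c} \ F} and S = {m+c+1,...,m+2c}, r({f(i)} ∪ S ∪ T) = r(S ∪ T). -/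
/-!
View the ambient space `F^{(m × n) ⊕ c}` as the dual of the space of pairs `(y, ε)` of a message
tuple and an error vector. Ground element `k ≤ m` is the span of the coordinate functionals of
`x_k`, element `m + j` is the error coordinate `ε_j`, and element `m + c + j` is the received symbol
`(yL + ε)_j`. Ranks of sums of subspaces always form a representable polymatroid, and (A), (B) are
immediate because a received symbol differs from its error coordinate by a functional of the
messages alone.

For (C), by duality `x_{f(i)}` is a linear function of the received symbols, the side information
and the errors outside `F` unless some `(z, ε)` annihilated by all of these has `z_{f(i)} ≠ 0`.
Such a `z` has `z_{H_i} = 0` and `zL = -ε` supported on `F`, so `zL = ε₁ - ε₂` with both `εₖ` of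
weight at most `δ_i`; the decoder then receives the same data from `(z, ε₂)` as from `(0, ε₁)`,
whence `z_{f(i)} = 0`.
-/

open Matrix Module

namespace Submodule

theorem finset_sum_eq_sup {α R M : Type*} [Semiring R] [AddCommMonoid M] [Module R M]
    (V : α → Submodule R M) (s : Finset α) : ∑ i ∈ s, V i = s.sup V := rfl

theorem le_finset_sum {α R M : Type*} [Semiring R] [AddCommMonoid M] [Module R M]
    (V : α → Submodule R M) {s : Finset α} {i : α} (h : i ∈ s) : V i ≤ ∑ j ∈ s, V j :=
  Finset.le_sup (f := V) h

theorem sup_span_singleton_eq_of_sub_mem {R M : Type*} [Ring R] [AddCommGroup M]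
    [Module R M] {p : Submodule R M} {x y : M} (h : x - y ∈ p) : p ⊔ R ∙ x = p ⊔ R ∙ y := by
  have key : ∀ {x y : M}, x - y ∈ p → p ⊔ R ∙ x ≤ p ⊔ R ∙ y := fun {x y} h =>
    sup_le le_sup_left <| (span_singleton_le_iff_mem _ _).2 <| sub_add_cancel x y ▸
      add_mem (mem_sup_left h) (mem_sup_right (mem_span_singleton_self y))
  exact le_antisymm (key h) (key (neg_sub x y ▸ neg_mem h))

theorem mem_of_forall_dotProduct_eq_zero {ι K : Type*} [Fintype ι] [Field K]
    {U : Submodule K (ι → K)} {v : ι → K}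
    (h : ∀ a : ι → K, (∀ u ∈ U, a ⬝ᵥ u = 0) → a ⬝ᵥ v = 0) : v ∈ U := by
  classical
  rw [← Subspace.forall_mem_dualAnnihilator_apply_eq_zero_iff]
  intro φ hφ
  obtain ⟨a, rfl⟩ := (dotProductEquiv K ι).surjective φ
  exact h a fun u hu => (mem_dualAnnihilator _).1 hφ u hu

variable {α K W : Type*} [Field K] [AddCommGroup W] [Module K W] (V : α → Submodule K W)

theorem finrank_finset_sum_insert_of_le [DecidableEq α] {a : α} {X : Finset α}
    (h : V a ≤ ∑ i ∈ X, V i) :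
    finrank K ↥(∑ i ∈ insert a X, V i) = finrank K ↥(∑ i ∈ X, V i) := by
  rw [finset_sum_eq_sup, Finset.sup_insert, ← finset_sum_eq_sup, sup_eq_right.2 h]

variable [FiniteDimensional K W]

theorem finrank_finset_sum_mono {A B : Finset α} (h : A ⊆ B) :
    finrank K ↥(∑ i ∈ A, V i) ≤ finrank K ↥(∑ i ∈ B, V i) :=
  finrank_mono (Finset.sup_mono h)

theorem finrank_finset_sum_union_add_inter_le [DecidableEq α] (A B : Finset α) :
    finrank K ↥(∑ i ∈ A ∪ B, V i) + finrank K ↥(∑ i ∈ A ∩ B, V i) ≤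
      finrank K ↥(∑ i ∈ A, V i) + finrank K ↥(∑ i ∈ B, V i) := by
  have hinter : ∑ i ∈ A ∩ B, V i ≤ (∑ i ∈ A, V i) ⊓ ∑ i ∈ B, V i :=
    le_inf (Finset.sup_mono Finset.inter_subset_left) (Finset.sup_mono Finset.inter_subset_right)
  calc finrank K ↥(∑ i ∈ A ∪ B, V i) + finrank K ↥(∑ i ∈ A ∩ B, V i)
      ≤ finrank K ↥((∑ i ∈ A, V i) ⊔ ∑ i ∈ B, V i) +
          finrank K ↥((∑ i ∈ A, V i) ⊓ ∑ i ∈ B, V i) := by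
        rw [finset_sum_eq_sup, Finset.sup_union]
        exact Nat.add_le_add_left (finrank_mono hinter) _
    _ = _ := finrank_sup_add_finrank_inf_eq _ _

theorem exists_fin_finrank_finset_sum_eq :
    ∃ (N : ℕ) (V' : α → Submodule K (Fin N → K)),
      ∀ X : Finset α, finrank K ↥(∑ i ∈ X, V' i) = finrank K ↥(∑ i ∈ X, V i) := by
  let e := (Module.finBasis K W).equivFun
  refine ⟨finrank K W, fun i => (V i).map e.toLinearMap, fun X => ?_⟩
  rw [← LinearEquiv.finrank_map_eq e, finset_sum_eq_sup, finset_sum_eq_sup,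
    Finset.apply_sup_eq_sup_comp _ (fun p q => map_sup p q _) (map_bot _)]
  rfl

end Submodule

theorem hammingNorm_le_card_of_forall_notMem {ι β : Type*} [Fintype ι] [Zero β] [DecidableEq β]
    {x : ι → β} {s : Finset ι} (h : ∀ i ∉ s, x i = 0) : hammingNorm x ≤ s.card :=
  Finset.card_le_card fun i hi => by_contra fun hs => (Finset.mem_filter.1 hi).2 (h i hs)

theorem exists_add_eq_of_hammingNorm_le_add {ι β : Type*} [Fintype ι] [AddGroup β] [DecidableEq β]
    {v : ι → β} {a b : ℕ} (h : hammingNorm v ≤ a + b) :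
    ∃ ε₁ ε₂ : ι → β, hammingNorm ε₁ ≤ a ∧ hammingNorm ε₂ ≤ b ∧ v + ε₂ = ε₁ := by
  classical
  set S := Finset.univ.filter (v · ≠ 0)
  obtain ⟨S₁, hS₁, hcard⟩ := Finset.exists_subset_card_eq (min_le_right a S.card)
  refine ⟨fun i => if i ∈ S₁ then v i else 0, fun i => if i ∈ S₁ then 0 else -v i,
    (hammingNorm_le_card_of_forall_notMem (s := S₁) fun i hi => if_neg hi).trans
      (hcard.trans_le (min_le_left _ _)), ?_, ?_⟩
  · refine (hammingNorm_le_card_of_forall_notMem (s := S \ S₁) fun i hi => ?_).trans ?_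
    · by_cases hi₁ : i ∈ S₁
      · simp [hi₁]
      · have hv : v i = 0 :=
          by_contra fun hv => hi (Finset.mem_sdiff.2 ⟨by simpa [S] using hv, hi₁⟩)
        simp [hi₁, hv]
    · have hS : hammingNorm v = S.card := rfl
      rw [Finset.card_sdiff_of_subset hS₁]
      omega
  · funext i
    by_cases hi : i ∈ S₁ <;> simp [hi]

namespace IndexCode

open Submodule

variable {F : Type*} [Field F] {m n c : ℕ}

theorem eq_zero_of_decoder_of_hammingNorm_le [DecidableEq F] {L : Matrix (Fin m × Fin n) (Fin c) F}
    {H : Finset (Fin m)} {k : Fin m} {δ : ℕ}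
    {ψ : (Fin c → F) → ({k' : Fin m // k' ∈ H} → Fin n → F) → (Fin n → F)}
    (hψ : ∀ x : Fin m → Fin n → F, ∀ ε : Fin c → F, hammingNorm ε ≤ δ →
      ψ (vecMul (fun p : Fin m × Fin n => x p.1 p.2) L + ε) (fun k' => x k'.1) = x k)
    {x : Fin m → Fin n → F} (hxH : ∀ k' ∈ H, x k' = 0)
    (hx : hammingNorm (vecMul (fun p : Fin m × Fin n => x p.1 p.2) L) ≤ 2 * δ) : x k = 0 := by
  obtain ⟨ε₁, ε₂, hε₁, hε₂, hsplit⟩ := exists_add_eq_of_hammingNorm_le_add (hx.trans_eq (two_mul δ))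
  have hside : (fun k' : {k' // k' ∈ H} => x k'.1) = fun _ => 0 :=
    funext fun k' => hxH k'.1 k'.2
  have hdec_x := hψ x ε₂ hε₂
  have hdec_zero := hψ 0 ε₁ hε₁
  have hzero : vecMul (fun p : Fin m × Fin n => (0 : Fin m → Fin n → F) p.1 p.2) L = 0 :=
    zero_vecMul L
  rw [hsplit, hside] at hdec_x
  rw [hzero, zero_add] at hdec_zero
  exact hdec_x.symm.trans hdec_zero

def messageSubspace (k : Fin m) : Submodule F ((Fin m × Fin n) ⊕ Fin c → F) :=
  span F (Set.range fun s : Fin n => Pi.single (Sum.inl (k, s)) (1 : F))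

def receivedSymbol (L : Matrix (Fin m × Fin n) (Fin c) F) (j : Fin c) :
    (Fin m × Fin n) ⊕ Fin c → F :=
  Sum.elim (fun p => L p j) (Pi.single j 1)

def codeSubspace (L : Matrix (Fin m × Fin n) (Fin c) F) (i : Fin (m + 2 * c)) :
    Submodule F ((Fin m × Fin n) ⊕ Fin c → F) :=
  if h : i.1 < m then messageSubspace ⟨i, h⟩
  else if h' : i.1 < m + c then F ∙ Pi.single (Sum.inr ⟨i - m, by omega⟩) 1
  else F ∙ receivedSymbol L ⟨i - (m + c), by omega⟩

section CodeSubspace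

variable (L : Matrix (Fin m × Fin n) (Fin c) F) {i : Fin (m + 2 * c)}

theorem finrank_messageSubspace (k : Fin m) :
    finrank F (messageSubspace k : Submodule F ((Fin m × Fin n) ⊕ Fin c → F)) = n := by
  classical
  rw [messageSubspace, finrank_span_eq_card, Fintype.card_fin]
  exact (Pi.linearIndependent_single_one _ F).comp _ fun s t h => by simpa using h

theorem receivedSymbol_ne_zero (j : Fin c) : receivedSymbol L j ≠ 0 :=
  fun h => by simpa [receivedSymbol] using congrFun h (Sum.inr j)

theorem dotProduct_receivedSymbol (a : (Fin m × Fin n) ⊕ Fin c → F) (j : Fin c) :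
    a ⬝ᵥ receivedSymbol L j = vecMul (fun p => a (Sum.inl p)) L j + a (Sum.inr j) := by
  simp [receivedSymbol, dotProduct, Fintype.sum_sum_type, vecMul, Pi.single_apply]

theorem codeSubspace_of_lt (h : i.1 < m) : codeSubspace L i = messageSubspace ⟨i, h⟩ :=
  dif_pos h

theorem codeSubspace_of_eq_add {j : Fin c} (h : i.1 = m + j) :
    codeSubspace L i = F ∙ Pi.single (Sum.inr j) 1 := by
  obtain ⟨i, hi⟩ := i
  subst h
  simp [codeSubspace]

theorem codeSubspace_of_eq_add_add {j : Fin c} (h : i.1 = m + c + j) :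
    codeSubspace L i = F ∙ receivedSymbol L j := by
  obtain ⟨i, hi⟩ := i
  subst h
  simp [codeSubspace, show ¬ m + c + j.1 < m by omega]

theorem finrank_codeSubspace_of_lt (h : i.1 < m) : finrank F (codeSubspace L i) = n := by
  rw [codeSubspace_of_lt L h, finrank_messageSubspace]

theorem finrank_codeSubspace_of_le (h : m ≤ i.1) : finrank F (codeSubspace L i) = 1 := by
  obtain ⟨v, hv, hV⟩ : ∃ v, v ≠ 0 ∧ codeSubspace L i = F ∙ v := by
    rw [codeSubspace, dif_neg h.not_gt]
    split_ifs
    exacts [⟨_, by simp, rfl⟩, ⟨_, receivedSymbol_ne_zero L _, rfl⟩]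
  rw [hV, finrank_span_singleton hv]

variable {X : Finset (Fin (m + 2 * c))}

theorem single_inl_mem_sum_codeSubspace {p : Fin m × Fin n} (hX : i ∈ X) (h : i.1 = p.1) :
    Pi.single (Sum.inl p) 1 ∈ ∑ i ∈ X, codeSubspace L i := by
  refine le_finset_sum _ hX ?_
  have hp : (⟨i, h ▸ p.1.isLt⟩ : Fin m) = p.1 := Fin.ext h
  rw [codeSubspace_of_lt L (h ▸ p.1.isLt), hp]
  exact subset_span ⟨p.2, rfl⟩

theorem single_inr_mem_sum_codeSubspace {j : Fin c} (hX : i ∈ X) (h : i.1 = m + j) :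
    Pi.single (Sum.inr j) 1 ∈ ∑ i ∈ X, codeSubspace L i :=
  le_finset_sum _ hX ((codeSubspace_of_eq_add L h).symm ▸ mem_span_singleton_self _)

theorem receivedSymbol_mem_sum_codeSubspace {j : Fin c} (hX : i ∈ X) (h : i.1 = m + c + j) :
    receivedSymbol L j ∈ ∑ i ∈ X, codeSubspace L i :=
  le_finset_sum _ hX ((codeSubspace_of_eq_add_add L h).symm ▸ mem_span_singleton_self _)

theorem sum_codeSubspace_eq_top (hX : ∀ i : Fin (m + 2 * c), i.1 < m + c → i ∈ X) :
    ∑ i ∈ X, codeSubspace L i = ⊤ := by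
  classical
  rw [eq_top_iff, ← (Pi.basisFun F _).span_eq, span_le]
  rintro _ ⟨b | j, rfl⟩ <;> rw [SetLike.mem_coe, Pi.basisFun_apply]
  · exact single_inl_mem_sum_codeSubspace L (i := ⟨b.1, by omega⟩) (hX _ (by simp; omega)) rfl
  · exact single_inr_mem_sum_codeSubspace L (i := ⟨m + j, by omega⟩) (hX _ (by simp)) rfl

theorem finrank_sum_codeSubspace_eq (hX : ∀ i : Fin (m + 2 * c), i.1 < m + c → i ∈ X) :
    finrank F ↥(∑ i ∈ X, codeSubspace L i) = m * n + c := by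
  rw [sum_codeSubspace_eq_top L hX, finrank_top, finrank_fintype_fun_eq_card]
  simp

theorem sumElim_zero_mem_sum_codeSubspace (hX : ∀ i : Fin (m + 2 * c), i.1 < m → i ∈ X)
    (u : Fin m × Fin n → F) : Sum.elim u 0 ∈ ∑ i ∈ X, codeSubspace L i := by
  classical
  have hu : Sum.elim u 0 = ∑ p, u p • (Pi.single (Sum.inl p) 1 : (Fin m × Fin n) ⊕ Fin c → F) := by
    ext (q | j) <;> simp [Finset.sum_apply, Pi.single_apply]
  rw [hu]
  exact sum_mem fun p _ => smul_mem _ _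
    (single_inl_mem_sum_codeSubspace L (i := ⟨p.1, by omega⟩) (hX _ p.1.isLt) rfl)

theorem receivedSymbol_sub_single (j : Fin c) :
    receivedSymbol L j - Pi.single (Sum.inr j) 1 = Sum.elim (fun p => L p j) 0 := by
  ext (p | j') <;> simp [receivedSymbol, Pi.single_apply]

variable {a b : Fin (m + 2 * c)} {j : Fin c}

theorem sum_codeSubspace_union_received (hX : ∀ i : Fin (m + 2 * c), i.1 < m → i ∈ X)
    (ha : a.1 = m + j) (hb : b.1 = m + c + j) :
    ∑ i ∈ X ∪ {b}, codeSubspace L i = ∑ i ∈ X ∪ {a}, codeSubspace L i := by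
  simp only [finset_sum_eq_sup, Finset.sup_union, Finset.sup_singleton]
  rw [← finset_sum_eq_sup, codeSubspace_of_eq_add_add L hb, codeSubspace_of_eq_add L ha]
  exact sup_span_singleton_eq_of_sub_mem
    (receivedSymbol_sub_single L j ▸ sumElim_zero_mem_sum_codeSubspace L hX _)

theorem sum_codeSubspace_union_error_received (hX : ∀ i : Fin (m + 2 * c), i.1 < m → i ∈ X)
    (ha : a.1 = m + j) (hb : b.1 = m + c + j) :
    ∑ i ∈ X ∪ {a, b}, codeSubspace L i = ∑ i ∈ X ∪ {a}, codeSubspace L i := by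
  have h := sum_codeSubspace_union_received L hX ha hb
  simp only [finset_sum_eq_sup, Finset.sup_union, Finset.sup_insert, Finset.sup_singleton] at h ⊢
  rw [← sup_assoc]
  exact sup_eq_left.2 (le_sup_right.trans h.le)

end CodeSubspace

theorem messageSubspace_le_of_decoder [DecidableEq F] {L : Matrix (Fin m × Fin n) (Fin c) F}
    {H : Finset (Fin m)} {k : Fin m} {δ : ℕ}
    {ψ : (Fin c → F) → ({k' : Fin m // k' ∈ H} → Fin n → F) → (Fin n → F)}
    (hψ : ∀ x : Fin m → Fin n → F, ∀ ε : Fin c → F, hammingNorm ε ≤ δ →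
      ψ (vecMul (fun p : Fin m × Fin n => x p.1 p.2) L + ε) (fun k' => x k'.1) = x k)
    {Fp : Finset (Fin c)} (hFp : Fp.card ≤ 2 * δ) {U : Submodule F ((Fin m × Fin n) ⊕ Fin c → F)}
    (hreceived : ∀ j, receivedSymbol L j ∈ U)
    (hside : ∀ k' ∈ H, ∀ s, Pi.single (Sum.inl (k', s)) 1 ∈ U)
    (herror : ∀ j ∉ Fp, Pi.single (Sum.inr j) 1 ∈ U) :
    messageSubspace k ≤ U := by
  rw [messageSubspace, span_le]
  rintro _ ⟨s, rfl⟩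
  refine mem_of_forall_dotProduct_eq_zero fun a ha => ?_
  let z : Fin m → Fin n → F := fun k' s' => a (Sum.inl (k', s'))
  have hz_side : ∀ k' ∈ H, z k' = 0 := fun k' hk' => funext fun s' => by
    simpa [z] using ha _ (hside k' hk' s')
  have hzL : ∀ j ∉ Fp, vecMul (fun p : Fin m × Fin n => z p.1 p.2) L j = 0 := fun j hj => by
    have h := ha _ (hreceived j)
    have herr : a (Sum.inr j) = 0 := by simpa using ha _ (herror j hj)
    rwa [dotProduct_receivedSymbol L, herr, add_zero] at h
  have hz := eq_zero_of_decoder_of_hammingNorm_le hψ hz_side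
    ((hammingNorm_le_card_of_forall_notMem hzL).trans hFp)
  simpa [z] using congrFun hz s

end IndexCode

/-- The 'only if' direction of Theorem 1: existence of a vector linear
differential error correcting index code implies existence of a representable
discrete polymatroid satisfying conditions (A), (B) and (C). -/
theorem stmt6 (F : Type) [Field F] [DecidableEq F]
    (m n c t : ℕ)
    (f : Fin t → Fin m) (Hs : Fin t → Finset (Fin m))
    (δ : Fin t → ℕ) :
    (∃ L : Matrix (Fin m × Fin n) (Fin c) F, ∀ i : Fin t,
      ∃ ψ : (Fin c → F) → ({k : Fin m // k ∈ Hs i} → Fin n → F) → (Fin n → F),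
        ∀ x : Fin m → Fin n → F, ∀ ε : Fin c → F, hammingNorm ε ≤ δ i →
          ψ (Matrix.vecMul (fun p : Fin m × Fin n => x p.1 p.2) L + ε)
            (fun k : {k : Fin m // k ∈ Hs i} => x k.1) = x (f i))
    →
    (∃ r : Finset (Fin (m + 2 * c)) → ℕ,
      -- discrete polymatroid rank axioms
      r ∅ = 0 ∧
      (∀ A B : Finset (Fin (m + 2 * c)), A ⊆ B → r A ≤ r B) ∧
      (∀ A B : Finset (Fin (m + 2 * c)), r (A ∪ B) + r (A ∩ B) ≤ r A + r B) ∧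
      -- representable over F
      (∃ (N : ℕ) (V : Fin (m + 2 * c) → Submodule F (Fin N → F)),
        ∀ X : Finset (Fin (m + 2 * c)),
          Module.finrank F ↥(∑ i ∈ X, V i) = r X) ∧
      -- rank of the discrete polymatroid
      r Finset.univ = m * n + c ∧
      -- condition (A)
      (∀ i : Fin m, r {(⟨i.1, by omega⟩ : Fin (m + 2 * c))} = n) ∧
      r (Finset.univ.filter (fun x : Fin (m + 2 * c) => x.1 < m + c)) = m * n + c ∧
      (∀ i : Fin (2 * c), r {(⟨m + i.1, by omega⟩ : Fin (m + 2 * c))} = 1) ∧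
      -- condition (B)
      (∀ i : Fin c,
        r ((Finset.univ.filter (fun x : Fin (m + 2 * c) => x.1 < m)) ∪
            {(⟨m + i.1, by omega⟩ : Fin (m + 2 * c)),
             (⟨m + c + i.1, by omega⟩ : Fin (m + 2 * c))})
          = r ((Finset.univ.filter (fun x : Fin (m + 2 * c) => x.1 < m)) ∪
              {(⟨m + i.1, by omega⟩ : Fin (m + 2 * c))}) ∧
        r ((Finset.univ.filter (fun x : Fin (m + 2 * c) => x.1 < m)) ∪
            {(⟨m + i.1, by omega⟩ : Fin (m + 2 * c))})
          = r ((Finset.univ.filter (fun x : Fin (m + 2 * c) => x.1 < m)) ∪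
              {(⟨m + c + i.1, by omega⟩ : Fin (m + 2 * c))})) ∧
      -- condition (C)
      (∀ i : Fin t, ∀ Fp : Finset (Fin c), Fp.card = 2 * δ i →
        r (insert (⟨(f i).1, by omega⟩ : Fin (m + 2 * c))
            ((Finset.univ.filter (fun x : Fin (m + 2 * c) => m + c ≤ x.1)) ∪
              ((Hs i).image (fun k : Fin m => (⟨k.1, by omega⟩ : Fin (m + 2 * c))) ∪
                Fpᶜ.image (fun j : Fin c => (⟨m + j.1, by omega⟩ : Fin (m + 2 * c))))))
          = r ((Finset.univ.filter (fun x : Fin (m + 2 * c) => m + c ≤ x.1)) ∪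
              ((Hs i).image (fun k : Fin m => (⟨k.1, by omega⟩ : Fin (m + 2 * c))) ∪
                Fpᶜ.image (fun j : Fin c => (⟨m + j.1, by omega⟩ : Fin (m + 2 * c))))))) := by
  rintro ⟨L, hL⟩
  obtain ⟨N, V, hV⟩ := Submodule.exists_fin_finrank_finset_sum_eq (IndexCode.codeSubspace L)
  have hmsg : ∀ i : Fin (m + 2 * c), i.1 < m →
      i ∈ Finset.univ.filter (fun x : Fin (m + 2 * c) => x.1 < m) := fun i hi => by simpa
  refine ⟨fun X => Module.finrank F ↥(∑ i ∈ X, IndexCode.codeSubspace L i), ?_,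
    fun A B => Submodule.finrank_finset_sum_mono _,
    Submodule.finrank_finset_sum_union_add_inter_le _,
    ⟨N, V, hV⟩, IndexCode.finrank_sum_codeSubspace_eq L fun i _ => Finset.mem_univ i,
    fun k => ?_, IndexCode.finrank_sum_codeSubspace_eq L fun i hi => by simpa,
    fun i => ?_, fun j => ⟨?_, ?_⟩, fun i Fp hFp => ?_⟩ <;> beta_reduce
  · exact finrank_bot F _
  · rw [Finset.sum_singleton]
    exact IndexCode.finrank_codeSubspace_of_lt L k.isLt
  · rw [Finset.sum_singleton]
    exact IndexCode.finrank_codeSubspace_of_le L (Nat.le_add_right m i)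
  · rw [IndexCode.sum_codeSubspace_union_error_received L hmsg rfl rfl]
  · rw [← IndexCode.sum_codeSubspace_union_received L hmsg (b := ⟨m + c + j, by omega⟩) rfl rfl]
  · obtain ⟨ψ, hψ⟩ := hL i
    refine Submodule.finrank_finset_sum_insert_of_le _ ?_
    rw [IndexCode.codeSubspace_of_lt L (f i).isLt]
    refine IndexCode.messageSubspace_le_of_decoder hψ hFp.le (fun j => ?_) (fun k hk s => ?_)
      (fun j hj => ?_)
    · exact IndexCode.receivedSymbol_mem_sum_codeSubspace L (i := ⟨m + c + j, by omega⟩)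
        (Finset.mem_union_left _ (by simp)) rfl
    · exact IndexCode.single_inl_mem_sum_codeSubspace L
        (Finset.mem_union_right _ (Finset.mem_union_left _ (Finset.mem_image_of_mem _ hk))) rfl
    · exact IndexCode.single_inr_mem_sum_codeSubspace L (Finset.mem_union_right _
        (Finset.mem_union_right _ (Finset.mem_image_of_mem _ (Finset.mem_compl.2 hj)))) rfl
end

section
/- Define r : 2^{{1,2,3,4}} → Z_{≥0} by r(∅)=0; r({1})=r({2})=r({3})=r({4})=2; r({1,2})=r({1,3})=r({1,4})=r({2,3})=r({2,4})=3; and r({3,4})=r({1,2,3})=r({1,2,4})=r({1,3,4})=r({2,3,4})=r({1,2,3,4})=4. Then for every field F there do not exist subspaces V_1, V_2, V_3, V_4 of a finite-dimensional F-vector space such that dim(∑_{i∈X} V_i) = r(X) for all X ⊆ {1,2,3,4}; that is, the discrete polymatroid with rank function r is not representable over any field. -/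
/-!
Dimension of subspaces is modular, and this forces the Ingleton inequality
`d A + d B + d (A ⊔ B ⊔ C) + d (A ⊔ B ⊔ D) + d (C ⊔ D)
  ≤ d (A ⊔ B) + d (A ⊔ C) + d (A ⊔ D) + d (B ⊔ C) + d (B ⊔ D)`
on any four subspaces, while the given `r` violates it: `16 > 15`.
-/

open Module

namespace Submodule

variable {K W : Type*} [DivisionRing K] [AddCommGroup W] [Module K W] [FiniteDimensional K W]

/-- Modularity applied to `X = (A ⊓ B) ⊔ C` and `Y = (A ⊓ B) ⊔ D`, whose meet contains `A ⊓ B`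
and whose join contains `C ⊔ D`. -/
theorem finrank_inf_add_finrank_sup_le (A B C D : Submodule K W) :
    finrank K ↥(A ⊓ B) + finrank K ↥(C ⊔ D) ≤
      finrank K ↥(A ⊓ B ⊔ C) + finrank K ↥(A ⊓ B ⊔ D) := by
  have hmeet : A ⊓ B ≤ (A ⊓ B ⊔ C) ⊓ (A ⊓ B ⊔ D) := le_inf le_sup_left le_sup_left
  have hjoin : C ⊔ D ≤ (A ⊓ B ⊔ C) ⊔ (A ⊓ B ⊔ D) := sup_le_sup le_sup_right le_sup_right
  have := finrank_sup_add_finrank_inf_eq (A ⊓ B ⊔ C) (A ⊓ B ⊔ D)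
  have := finrank_mono hmeet
  have := finrank_mono hjoin
  omega

theorem finrank_inf_sup_add_finrank_sup_le (A B C : Submodule K W) :
    finrank K ↥(A ⊓ B ⊔ C) + finrank K ↥(A ⊔ B ⊔ C) ≤
      finrank K ↥(A ⊔ C) + finrank K ↥(B ⊔ C) := by
  have hle : A ⊓ B ⊔ C ≤ (A ⊔ C) ⊓ (B ⊔ C) :=
    sup_le (inf_le_inf le_sup_left le_sup_left) (le_inf le_sup_right le_sup_right)
  have hsup : (A ⊔ C) ⊔ (B ⊔ C) = A ⊔ B ⊔ C := by rw [sup_sup_sup_comm, sup_idem]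
  have hmod := finrank_sup_add_finrank_inf_eq (A ⊔ C) (B ⊔ C)
  rw [hsup] at hmod
  have := finrank_mono hle
  omega

theorem ingleton (A B C D : Submodule K W) :
    finrank K A + finrank K B + finrank K ↥(A ⊔ B ⊔ C) + finrank K ↥(A ⊔ B ⊔ D) +
        finrank K ↥(C ⊔ D) ≤
      finrank K ↥(A ⊔ B) + finrank K ↥(A ⊔ C) + finrank K ↥(A ⊔ D) + finrank K ↥(B ⊔ C) +
        finrank K ↥(B ⊔ D) := by
  have := finrank_sup_add_finrank_inf_eq A B
  have := finrank_inf_add_finrank_sup_le A B C D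
  have := finrank_inf_sup_add_finrank_sup_le A B C
  have := finrank_inf_sup_add_finrank_sup_le A B D
  omega

theorem ingleton_finset_sum {ι : Type*} [DecidableEq ι] (V : ι → Submodule K W) {a b c d : ι}
    (hab : a ≠ b) (hac : a ≠ c) (had : a ≠ d) (hbc : b ≠ c) (hbd : b ≠ d) (hcd : c ≠ d) :
    finrank K ↥(∑ i ∈ {a}, V i) + finrank K ↥(∑ i ∈ {b}, V i) +
        finrank K ↥(∑ i ∈ {a, b, c}, V i) + finrank K ↥(∑ i ∈ {a, b, d}, V i) +
        finrank K ↥(∑ i ∈ {c, d}, V i) ≤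
      finrank K ↥(∑ i ∈ {a, b}, V i) + finrank K ↥(∑ i ∈ {a, c}, V i) +
        finrank K ↥(∑ i ∈ {a, d}, V i) + finrank K ↥(∑ i ∈ {b, c}, V i) +
        finrank K ↥(∑ i ∈ {b, d}, V i) := by
  have pair {i j : ι} (hij : i ≠ j) : ∑ k ∈ {i, j}, V k = V i ⊔ V j := by
    rw [Finset.sum_pair hij, add_eq_sup]
  have triple {i j k : ι} (hij : i ≠ j) (hik : i ≠ k) (hjk : j ≠ k) :
      ∑ l ∈ {i, j, k}, V l = V i ⊔ V j ⊔ V k := by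
    rw [Finset.sum_insert (by simp [hij, hik]), pair hjk, add_eq_sup, sup_assoc]
  rw [Finset.sum_singleton, Finset.sum_singleton, triple hab hac hbc, triple hab had hbd,
    pair hcd, pair hab, pair hac, pair had, pair hbc, pair hbd]
  exact ingleton (V a) (V b) (V c) (V d)

end Submodule

theorem stmt12_general (r : Finset (Fin 4) → ℕ)
    (hs1 : r {0} = 2) (hs2 : r {1} = 2)
    (h12 : r {0, 1} = 3) (h13 : r {0, 2} = 3) (h14 : r {0, 3} = 3)
    (h23 : r {1, 2} = 3) (h24 : r {1, 3} = 3)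
    (h34 : r {2, 3} = 4)
    (h123 : r {0, 1, 2} = 4) (h124 : r {0, 1, 3} = 4)
    (F W : Type) [Field F] [AddCommGroup W] [Module F W] [FiniteDimensional F W]
    (V : Fin 4 → Submodule F W) :
    ¬ (∀ X : Finset (Fin 4), Module.finrank F ↥(∑ i ∈ X, V i) = r X) := by
  intro h
  have := Submodule.ingleton_finset_sum V (a := 0) (b := 1) (c := 2) (d := 3)
    (by decide) (by decide) (by decide) (by decide) (by decide) (by decide)
  simp only [h, hs1, hs2, h12, h13, h14, h23, h24, h34, h123, h124] at this
  omega

/-- Example 4 of the paper: the discrete polymatroid on ground set `{1,2,3,4}`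
with the given rank function (which violates the Ingleton inequality) is not
representable over any field. -/
theorem stmt12 (r : Finset (Fin 4) → ℕ)
    (h0 : r ∅ = 0)
    (hs1 : r {0} = 2) (hs2 : r {1} = 2) (hs3 : r {2} = 2) (hs4 : r {3} = 2)
    (h12 : r {0, 1} = 3) (h13 : r {0, 2} = 3) (h14 : r {0, 3} = 3)
    (h23 : r {1, 2} = 3) (h24 : r {1, 3} = 3)
    (h34 : r {2, 3} = 4)
    (h123 : r {0, 1, 2} = 4) (h124 : r {0, 1, 3} = 4)
    (h134 : r {0, 2, 3} = 4) (h234 : r {1, 2, 3} = 4)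
    (hall : r {0, 1, 2, 3} = 4)
    (F W : Type) [Field F] [AddCommGroup W] [Module F W] [FiniteDimensional F W]
    (V : Fin 4 → Submodule F W) :
    ¬ (∀ X : Finset (Fin 4), Module.finrank F ↥(∑ i ∈ X, V i) = r X) :=
  stmt12_general r hs1 hs2 h12 h13 h14 h23 h24 h34 h123 h124 F W V
end
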